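/- Let δ be a symbolic 3-dissimilarity on X that is representable by a labelled level-1 network. Then δ satisfies the Helly-type property: for all distinct x,y,z ∈ X, δ(x,y,z) ∈ {δ(x,y), δ(x,z), δ(y,z)}. -/

import Mathlib

/-- A rooted phylogenetic network on leaf set `X`: a rooted DAG whose leaves are
identified with `X`, with no vertex of indegree one and outdegree one. -/
structure PhyloNetwork (X : Type) [Fintype X] [DecidableEq X] where
  V : Type
  [instFin : Fintype V]
  [instDec : DecidableEq V]
  adj : V → V → Prop
  root : V
  leaf : X → V
  acyclic : ∀ v : V, ¬ Relation.TransGen adj v v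
  root_no_in : ∀ u : V, ¬ adj u root
  connected : ∀ v : V, Relation.ReflTransGen adj root v
  leaf_inj : Function.Injective leaf
  leaf_no_out : ∀ (x : X) (w : V), ¬ adj (leaf x) w
  leaves_only : ∀ v : V, (∀ w : V, ¬ adj v w) → v = root ∨ ∃ x, leaf x = v
  no_inout_one : ∀ v : V, ¬ ((∃! u : V, adj u v) ∧ (∃! w : V, adj v w))

namespace PhyloNetwork

variable {X : Type} [Fintype X] [DecidableEq X]

/-- Reachability by a directed path. -/
def reaches (N : PhyloNetwork X) : N.V → N.V → Prop := Relation.ReflTransGen N.adj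

/-- The offspring set of a vertex: all leaves below it. -/
def F (N : PhyloNetwork X) (v : N.V) : Set X := {x | N.reaches v (N.leaf x)}

/-- `v` is a leaf vertex. -/
def IsLeafV (N : PhyloNetwork X) (v : N.V) : Prop := ∃ x, N.leaf x = v

/-- `v` is a lowest common ancestor of the set `Y` of leaves. -/
def IsLca (N : PhyloNetwork X) (Y : Finset X) (v : N.V) : Prop :=
  (∀ x ∈ Y, x ∈ N.F v) ∧ ∀ w : N.V, N.adj v w → ¬ (∀ x ∈ Y, x ∈ N.F w)

/-- A cycle of a (level-1) network: two edge-disjoint, internally vertex-disjoint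
directed paths from a root `r` to a hybrid `h`, with at least 3 vertices in total.
`side1` and `side2` list the internal vertices of the two sides in order. -/
structure NCycle (N : PhyloNetwork X) where
  r : N.V
  h : N.V
  side1 : List N.V
  side2 : List N.V
  chain1 : List.Chain N.adj r (side1 ++ [h])
  chain2 : List.Chain N.adj r (side2 ++ [h])
  ne : r ≠ h
  nodup1 : (r :: (side1 ++ [h])).Nodup
  nodup2 : (r :: (side2 ++ [h])).Nodup
  disj : ∀ v ∈ side1, v ∉ side2
  nontriv : side1 ≠ [] ∨ side2 ≠ []

/-- The vertex set of a cycle. -/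
def NCycle.verts {N : PhyloNetwork X} (C : NCycle N) : Set N.V :=
  {C.r, C.h} ∪ {v | v ∈ C.side1} ∪ {v | v ∈ C.side2}

/-- A level-1 network: every vertex belongs to at most one cycle. -/
def IsLevelOne (N : PhyloNetwork X) : Prop :=
  ∀ C C' : NCycle N, ∀ v : N.V, v ∈ C.verts → v ∈ C'.verts → C.verts = C'.verts

/-- `R(C)`: the leaves below the root of the cycle `C`. -/
def NCycle.RC {N : PhyloNetwork X} (C : NCycle N) : Set X := N.F C.r

/-- `H(C)`: the leaves below the hybrid of the cycle `C`. -/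
def NCycle.HC {N : PhyloNetwork X} (C : NCycle N) : Set X := N.F C.h

/-- `v` is the last ancestor `v_C(x)` of the leaf `x` lying in the cycle `C`. -/
def NCycle.LastAnc {N : PhyloNetwork X} (C : NCycle N) (v : N.V) (x : X) : Prop :=
  v ∈ C.verts ∧ N.reaches v (N.leaf x) ∧
    ∀ w ∈ C.verts, N.reaches w (N.leaf x) → N.reaches w v

end PhyloNetwork

/-- A symbolic 3-dissimilarity on `X` with values in `M ∪ {⊙}` (`⊙` = `none`):
singletons get `⊙`, sets of size 2 or 3 get values in `M`. -/
structure SymbolicDissim3 (X M : Type) [DecidableEq X] where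
  val : Finset X → Option M
  singleton_none : ∀ A : Finset X, A.card = 1 → val A = none
  pair_some : ∀ A : Finset X, A.card = 2 ∨ A.card = 3 → val A ≠ none

/-- The labelled network `(N,t)` represents `δ`: for every `Y ⊆ X` of size 2 or 3,
`δ(Y) = t(lca_N(Y))`. -/
def PhyloNetwork.Represents {X M : Type} [Fintype X] [DecidableEq X]
    (N : PhyloNetwork X) (t : N.V → M) (d : SymbolicDissim3 X M) : Prop :=
  ∀ Y : Finset X, Y.card = 2 ∨ Y.card = 3 → ∀ v : N.V, N.IsLca Y v → d.val Y = some (t v)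

/-- `δ` is level-1 representable. -/
def SymbolicDissim3.LevelOneRepresentable {X M : Type} [Fintype X] [DecidableEq X]
    (d : SymbolicDissim3 X M) : Prop :=
  ∃ (N : PhyloNetwork X) (t : N.V → M), N.IsLevelOne ∧ N.Represents t d


namespace List

variable {α : Type*} {r : α → α → Prop}

theorem IsChain.nodup_of_acyclic (hr : ∀ a, ¬ Relation.TransGen r a a) {l : List α}
    (hl : l.IsChain r) : l.Nodup :=
  have : Std.Irrefl (Relation.TransGen r) := ⟨hr⟩
  (isChain_iff_pairwise.mp (hl.imp fun _ _ => Relation.TransGen.single)).nodup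

theorem IsChain.reflTransGen_getLast {l : List α} (hl : l.IsChain r) (hne : l ≠ []) :
    ∀ u ∈ l, Relation.ReflTransGen r u (l.getLast hne) :=
  hl.backwards_induction _ _ (fun _ _ => .head) fun _ => .refl

theorem exists_eq_append_cons_of_mem_of_mem {l₁ l₂ : List α} {a : α} (h₁ : a ∈ l₁)
    (h₂ : a ∈ l₂) : ∃ s c t, l₁ = s ++ c :: t ∧ c ∈ l₂ ∧ ∀ u ∈ s, u ∉ l₂ := by
  induction l₁ with
  | nil => cases h₁
  | cons b l ih =>
    by_cases hb : b ∈ l₂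
    · exact ⟨[], b, l, rfl, hb, by simp⟩
    obtain rfl | h₁ := mem_cons.mp h₁
    · exact absurd h₂ hb
    obtain ⟨s, c, t, rfl, hc, hs⟩ := ih h₁
    exact ⟨b :: s, c, t, rfl, hc, by simpa [hb] using hs⟩

end List

namespace PhyloNetwork

variable {X : Type} [Fintype X] [DecidableEq X] {N : PhyloNetwork X}

theorem NCycle.mem_verts {C : NCycle N} {u : N.V} :
    u ∈ C.verts ↔ u ∈ C.r :: (C.side1 ++ [C.h]) ∨ u ∈ C.r :: (C.side2 ++ [C.h]) := by
  simp only [NCycle.verts, Set.mem_union, Set.mem_insert_iff, Set.mem_ofPred_eq,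
    Set.mem_singleton_iff, List.mem_cons, List.mem_append]
  tauto

variable (N)

/-- The two paths from `v` through `w₁` and `w₂` to `b` close a cycle at their first common
vertex. -/
theorem exists_cycle_of_adj_of_reaches {v w₁ w₂ b : N.V} (hw : w₁ ≠ w₂)
    (h₁ : N.adj v w₁) (h₂ : N.adj v w₂) (r₁ : N.reaches w₁ b) (r₂ : N.reaches w₂ b) :
    ∃ C : NCycle N, v ∈ C.verts ∧ w₁ ∈ C.verts ∧ w₂ ∈ C.verts ∧
      ∀ u ∈ C.verts, N.reaches u b := by
  obtain ⟨l₁, c₁, e₁⟩ := List.exists_isChain_cons_of_relationReflTransGen r₁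
  obtain ⟨l₂, c₂, e₂⟩ := List.exists_isChain_cons_of_relationReflTransGen r₂
  replace c₁ : (v :: w₁ :: l₁).IsChain N.adj := c₁.cons_cons h₁
  replace c₂ : (v :: w₂ :: l₂).IsChain N.adj := c₂.cons_cons h₂
  have reach₁ := c₁.reflTransGen_getLast (List.cons_ne_nil _ _)
  have reach₂ := c₂.reflTransGen_getLast (List.cons_ne_nil _ _)
  rw [List.getLast_cons (List.cons_ne_nil _ _), e₁] at reach₁
  rw [List.getLast_cons (List.cons_ne_nil _ _), e₂] at reach₂
  obtain ⟨s₁, h, t₁, hp₁, hh, hs₁⟩ :=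
    List.exists_eq_append_cons_of_mem_of_mem (e₁ ▸ List.getLast_mem _) (e₂ ▸ List.getLast_mem _)
  obtain ⟨s₂, t₂, hp₂⟩ := List.append_of_mem hh
  have pre₁ : v :: (s₁ ++ [h]) <+: v :: w₁ :: l₁ := ⟨t₁, by simp [hp₁]⟩
  have pre₂ : v :: (s₂ ++ [h]) <+: v :: w₂ :: l₂ := ⟨t₂, by simp [hp₂]⟩
  have nd₁ := c₁.nodup_of_acyclic N.acyclic
  have head₁ : w₁ ∈ s₁ ++ [h] := by rcases s₁ with _ | ⟨a, s⟩ <;> simp_all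
  have head₂ : w₂ ∈ s₂ ++ [h] := by rcases s₂ with _ | ⟨a, s⟩ <;> simp_all
  let C : NCycle N :=
    { r := v, h := h, side1 := s₁, side2 := s₂
      chain1 := c₁.prefix pre₁
      chain2 := c₂.prefix pre₂
      ne := by
        rintro rfl
        exact (List.nodup_cons.mp nd₁).1 (hp₁ ▸ List.mem_append_right _ List.mem_cons_self)
      nodup1 := nd₁.sublist pre₁.sublist
      nodup2 := (c₂.nodup_of_acyclic N.acyclic).sublist pre₂.sublist
      disj := fun u hu hu₂ => hs₁ u hu (hp₂ ▸ List.mem_append_left _ hu₂)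
      nontriv := by
        by_contra! hnil
        obtain ⟨rfl, rfl⟩ := hnil
        simp_all }
  refine ⟨C, NCycle.mem_verts.mpr (.inl List.mem_cons_self),
    NCycle.mem_verts.mpr (.inl (List.mem_cons_of_mem _ head₁)),
    NCycle.mem_verts.mpr (.inr (List.mem_cons_of_mem _ head₂)), fun u hu => ?_⟩
  rcases NCycle.mem_verts.mp hu with hu | hu
  exacts [reach₁ u (pre₁.subset hu), reach₂ u (pre₂.subset hu)]

theorem wellFounded_flip_adj : WellFounded (flip N.adj) := by
  have := N.instFin
  have : IsTrans N.V (flip (Relation.TransGen N.adj)) := ⟨fun _ _ _ h₁ h₂ => h₂.trans h₁⟩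
  have : Std.Irrefl (flip (Relation.TransGen N.adj)) := ⟨N.acyclic⟩
  exact Subrelation.wf (r := flip (Relation.TransGen N.adj)) (fun h => .single h)
    (Finite.wellFounded_of_trans_of_irrefl _)

theorem exists_isLca (Y : Finset X) : ∃ v, N.IsLca Y v := by
  obtain ⟨v, hv, hmin⟩ := N.wellFounded_flip_adj.has_min {v | ∀ x ∈ Y, x ∈ N.F v}
    ⟨N.root, fun x _ => N.connected (N.leaf x)⟩
  exact ⟨v, hv, fun w hw hY => hmin w hY hw⟩

variable {N}

theorem exists_adj_of_not_isLca_pair {v : N.V} {a b : X} (ha : a ∈ N.F v) (hb : b ∈ N.F v)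
    (h : ¬ N.IsLca {a, b} v) : ∃ w, N.adj v w ∧ a ∈ N.F w ∧ b ∈ N.F w := by
  simpa [IsLca, ha, hb] using h

/-- If no pair of `x, y, z` had `lca` equal to `v = lca(x, y, z)`, three distinct children of `v`
would each lie above two of the leaves; the two cycles through `v` built from them must coincide
by level-1-ness, and then the third child lies above all three leaves. -/
theorem IsLevelOne.isLca_pair_of_isLca_triple (hN : N.IsLevelOne) {x y z : X} {v : N.V}
    (hv : N.IsLca {x, y, z} v) : N.IsLca {x, y} v ∨ N.IsLca {x, z} v ∨ N.IsLca {y, z} v := by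
  have hx : x ∈ N.F v := hv.1 x (by simp)
  have hy : y ∈ N.F v := hv.1 y (by simp)
  have hz : z ∈ N.F v := hv.1 z (by simp)
  have not_all : ∀ w, N.adj v w → x ∈ N.F w → y ∈ N.F w → z ∈ N.F w → False :=
    fun w hw hxw hyw hzw => hv.2 w hw (by simp [hxw, hyw, hzw])
  by_contra! h
  obtain ⟨h₁, h₂, h₃⟩ := h
  obtain ⟨w₁, a₁, hx₁, hy₁⟩ := exists_adj_of_not_isLca_pair hx hy h₁
  obtain ⟨w₂, a₂, hx₂, hz₂⟩ := exists_adj_of_not_isLca_pair hx hz h₂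
  obtain ⟨w₃, a₃, hy₃, hz₃⟩ := exists_adj_of_not_isLca_pair hy hz h₃
  have h₁₂ : w₁ ≠ w₂ := by rintro rfl; exact not_all w₁ a₁ hx₁ hy₁ hz₂
  have h₂₃ : w₂ ≠ w₃ := by rintro rfl; exact not_all w₂ a₂ hx₂ hy₃ hz₂
  obtain ⟨C₁, hv₁, -, -, hC₁⟩ := N.exists_cycle_of_adj_of_reaches h₁₂ a₁ a₂ hx₁ hx₂
  obtain ⟨C₂, hv₂, -, hw₃₂, -⟩ := N.exists_cycle_of_adj_of_reaches h₂₃ a₂ a₃ hz₂ hz₃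
  have hw₃₁ : w₃ ∈ C₁.verts := hN C₁ C₂ v hv₁ hv₂ ▸ hw₃₂
  exact not_all w₃ a₃ (hC₁ w₃ hw₃₁) hy₃ hz₃

end PhyloNetwork

theorem levelOneRepresentable_helly_general {X M : Type}
    [Fintype X] [DecidableEq X]
    (d : SymbolicDissim3 X M) (hrep : d.LevelOneRepresentable) :
    ∀ x y z : X, x ≠ y → x ≠ z → y ≠ z →
      d.val {x, y, z} = d.val {x, y} ∨ d.val {x, y, z} = d.val {x, z} ∨
        d.val {x, y, z} = d.val {y, z} := by
  intro x y z hxy hxz hyz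
  obtain ⟨N, t, hN, hrep⟩ := hrep
  obtain ⟨v, hv⟩ := N.exists_isLca {x, y, z}
  rw [hrep _ (.inr (Finset.card_eq_three.mpr ⟨x, y, z, hxy, hxz, hyz, rfl⟩)) v hv]
  rcases hN.isLca_pair_of_isLca_triple hv with h | h | h
  · exact .inl (hrep _ (.inl (Finset.card_pair hxy)) v h).symm
  · exact .inr (.inl (hrep _ (.inl (Finset.card_pair hxz)) v h).symm)
  · exact .inr (.inr (hrep _ (.inl (Finset.card_pair hyz)) v h).symm)

/-- A level-1 representable symbolic 3-dissimilarity satisfies the Helly-type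
property: `δ(x,y,z) ∈ {δ(x,y), δ(x,z), δ(y,z)}` for all distinct `x,y,z`. -/
theorem levelOneRepresentable_helly {X M : Type}
    [Fintype X] [DecidableEq X] [Fintype M] [DecidableEq M]
    (d : SymbolicDissim3 X M) (hrep : d.LevelOneRepresentable) :
    ∀ x y z : X, x ≠ y → x ≠ z → y ≠ z →
      d.val {x, y, z} = d.val {x, y} ∨ d.val {x, y, z} = d.val {x, z} ∨
        d.val {x, y, z} = d.val {y, z} :=
  levelOneRepresentable_helly_general d hrep
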